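/- arXiv:2102.02638 — 2 statements merged into one kernel-verified Lean document; each statement's English description precedes it below -/
import Mathlib

section
/- Let P be a finite nonempty set of partition points, with feature map x : P → ℝ^d such that x_P = 0 for a distinguished element P ∈ P (pure on-device processing), front-end delays d^f : P → ℝ, true coefficients θ* ∈ ℝ^d, an estimate θ̂ ∈ ℝ^d, a symmetric positive definite matrix A ∈ ℝ^{d×d}, a weight L ∈ [0,1), and α ≥ 0. Assume the prediction-error bound |θ̂ᵀ x_p − θ*ᵀ x_p| ≤ α √((1−L) x_pᵀ A⁻¹ x_p) holds for every p ∈ P. Let p* minimize p ↦ d^f_p + θ*ᵀ x_p over P and let p̂ minimize p ↦ d^f_p + θ̂ᵀ x_p − α√((1−L) x_pᵀ A⁻¹ x_p) over P. If p̂ ≠ P, then the one-step regret satisfies (d^f_{p̂} + θ*ᵀ x_{p̂}) − (d^f_{p*} + θ*ᵀ x_{p*}) ≤ 2α √(x_{p̂}ᵀ A⁻¹ x_{p̂}). -/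
open Matrix

/-!
The true delay of `p̂` exceeds its estimate by at most its confidence width, the optimistic
index of `p̂` is at most that of any comparator `q`, and the optimistic index of `q` is at most
its true delay; chaining these bounds the regret against every `q` by twice the width of `p̂`.
The factor `√(1 - L) ≤ 1` is then dropped from that width.
-/

theorem sub_le_two_nsmul_of_isMin_lower_confidence {ι G : Type*} [AddCommGroup G] [LinearOrder G]
    [IsOrderedAddMonoid G] (μ μhat w : ι → G) (hconf : ∀ p, |μhat p - μ p| ≤ w p)
    (phat : ι) (hphat : ∀ q, μhat phat - w phat ≤ μhat q - w q) (q : ι) :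
    μ phat - μ q ≤ 2 • w phat := by
  have hupper : μ phat - μhat phat ≤ w phat := (abs_sub_le_iff.1 (hconf phat)).2
  have hlower : μhat q - μ q ≤ w q := (abs_sub_le_iff.1 (hconf q)).1
  calc μ phat - μ q
      = (μ phat - μhat phat) + (μhat q - μ q) + ((μhat phat - w phat) - (μhat q - w q))
          + (w phat - w q) := by abel
    _ ≤ w phat + w q + 0 + (w phat - w q) := by
          gcongr
          exact sub_nonpos.2 (hphat q)
    _ = 2 • w phat := by rw [two_nsmul]; abel

theorem Real.sqrt_mul_le_sqrt_of_le_one {c : ℝ} (hc₀ : 0 ≤ c) (hc₁ : c ≤ 1) (t : ℝ) :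
    √(c * t) ≤ √t := by
  rw [Real.sqrt_mul hc₀]
  exact mul_le_of_le_one_left (Real.sqrt_nonneg t) (Real.sqrt_le_one.mpr hc₁)

theorem stmt_3_general {d : ℕ} {P : Type*}
    (x : P → Fin d → ℝ)
    (df : P → ℝ) (θstar θhat : Fin d → ℝ)
    (A : Matrix (Fin d) (Fin d) ℝ)
    (L : ℝ) (hL : L ∈ Set.Ico (0 : ℝ) 1) (α : ℝ) (hα : 0 ≤ α)
    (hpred : ∀ p : P, |θhat ⬝ᵥ x p - θstar ⬝ᵥ x p| ≤
      α * Real.sqrt ((1 - L) * (x p ⬝ᵥ A⁻¹.mulVec (x p))))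
    (pstar : P)
    (phat : P) (hphat : ∀ q : P,
      df phat + θhat ⬝ᵥ x phat - α * Real.sqrt ((1 - L) * (x phat ⬝ᵥ A⁻¹.mulVec (x phat))) ≤
      df q + θhat ⬝ᵥ x q - α * Real.sqrt ((1 - L) * (x q ⬝ᵥ A⁻¹.mulVec (x q)))) :
    (df phat + θstar ⬝ᵥ x phat) - (df pstar + θstar ⬝ᵥ x pstar) ≤
      2 * α * Real.sqrt (x phat ⬝ᵥ A⁻¹.mulVec (x phat)) := by
  have hregret := sub_le_two_nsmul_of_isMin_lower_confidence
    (fun p => df p + θstar ⬝ᵥ x p) (fun p => df p + θhat ⬝ᵥ x p)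
    (fun p => α * √((1 - L) * (x p ⬝ᵥ A⁻¹ *ᵥ x p)))
    (fun p => by simpa only [add_sub_add_left_eq_sub] using hpred p) phat hphat pstar
  have hwidth : √((1 - L) * (x phat ⬝ᵥ A⁻¹ *ᵥ x phat)) ≤ √(x phat ⬝ᵥ A⁻¹ *ᵥ x phat) :=
    Real.sqrt_mul_le_sqrt_of_le_one (by linarith [hL.2]) (by linarith [hL.1]) _
  rw [nsmul_eq_mul, Nat.cast_ofNat] at hregret
  nlinarith [mul_le_mul_of_nonneg_left hwidth hα]

/-- Regular-sampling case of the one-step regret bound (Lemma 3): if the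
prediction-error bound holds for every partition point, `p*` minimizes the true
delay, `p̂` minimizes the optimistic index, and `p̂` is not pure on-device
processing, then the one-step regret is at most `2α√(x_{p̂}ᵀA⁻¹x_{p̂})`. -/
theorem stmt_3 {d : ℕ} {P : Type*} [Fintype P] [Nonempty P]
    (pP : P) (x : P → Fin d → ℝ) (hxP : x pP = 0)
    (df : P → ℝ) (θstar θhat : Fin d → ℝ)
    (A : Matrix (Fin d) (Fin d) ℝ) (hA : A.PosDef)
    (L : ℝ) (hL : L ∈ Set.Ico (0 : ℝ) 1) (α : ℝ) (hα : 0 ≤ α)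
    (hpred : ∀ p : P, |θhat ⬝ᵥ x p - θstar ⬝ᵥ x p| ≤
      α * Real.sqrt ((1 - L) * (x p ⬝ᵥ A⁻¹.mulVec (x p))))
    (pstar : P) (hpstar : ∀ q : P,
      df pstar + θstar ⬝ᵥ x pstar ≤ df q + θstar ⬝ᵥ x q)
    (phat : P) (hphat : ∀ q : P,
      df phat + θhat ⬝ᵥ x phat - α * Real.sqrt ((1 - L) * (x phat ⬝ᵥ A⁻¹.mulVec (x phat))) ≤
      df q + θhat ⬝ᵥ x q - α * Real.sqrt ((1 - L) * (x q ⬝ᵥ A⁻¹.mulVec (x q))))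
    (hne : phat ≠ pP) :
    (df phat + θstar ⬝ᵥ x phat) - (df pstar + θstar ⬝ᵥ x pstar) ≤
      2 * α * Real.sqrt (x phat ⬝ᵥ A⁻¹.mulVec (x phat)) :=
  stmt_3_general x df θstar θhat A L hL α hα hpred pstar phat hphat
end

section
/- Let x₁, …, x_M ∈ ℝ^d satisfy ‖x_m‖₂² ≤ C_x² for all m, let β ≥ max{1, C_x²}, and define A₀ = β I_d and A_m = A_{m−1} + x_m x_mᵀ for m = 1, …, M. Then Σ_{m=1}^M x_mᵀ A_{m−1}⁻¹ x_m ≤ 2 log(det(A_M) / det(A₀)). -/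
open Matrix

/-- The design matrix after `m` samples: `A_m = βI_d + Σ_{s<m} x_s x_sᵀ`
(so `A_0 = βI_d` and `A_m = A_{m-1} + x_{m-1} x_{m-1}ᵀ`). -/
noncomputable def designMatrix {d : ℕ} (β : ℝ) (x : ℕ → Fin d → ℝ) (m : ℕ) :
    Matrix (Fin d) (Fin d) ℝ :=
  β • (1 : Matrix (Fin d) (Fin d) ℝ) + ∑ s ∈ Finset.range m, vecMulVec (x s) (x s)

/-! By the matrix determinant lemma, `det A_{m+1} = det A_m · (1 + q_m)` with
`q_m = x_mᵀ A_m⁻¹ x_m`, so `log (det A_M / det A_0)` telescopes to `Σ log (1 + q_m)`.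
Since `A_m ≥ βI`, `β q_m ≤ ‖x_m‖² ≤ C_x² ≤ β`, so `q_m ∈ [0, 1]`, where `q ≤ 2 log (1 + q)`. -/

section

variable {n : Type*} [Fintype n] [DecidableEq n]

theorem det_add_vecMulVec {R : Type*} [CommRing R] {A : Matrix n n R} (hA : IsUnit A.det)
    (u v : n → R) :
    (A + vecMulVec u v).det = A.det * (1 + v ⬝ᵥ A⁻¹ *ᵥ u) := by
  rw [vecMulVec_eq Unit, det_add_replicateCol_mul_replicateRow hA, Matrix.mul_assoc,
    ← replicateCol_mulVec, det_one_add_mul_comm, det_one_add_replicateCol_mul_replicateRow]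

theorem mul_dotProduct_inv_smul_one_add_mulVec_le {β : ℝ} (hβ : 0 < β) {S : Matrix n n ℝ}
    (hS : S.PosSemidef) (x : n → ℝ) :
    β * (x ⬝ᵥ (β • 1 + S)⁻¹ *ᵥ x) ≤ x ⬝ᵥ x := by
  set A := β • (1 : Matrix n n ℝ) + S
  set y := A⁻¹ *ᵥ x
  have hAy : A *ᵥ y = x := by
    have hA : A.PosDef := (PosDef.one.smul hβ).add_posSemidef hS
    rw [mulVec_mulVec, mul_nonsing_inv _ hA.det_pos.ne'.isUnit, one_mulVec]
  have hyAy : β * (y ⬝ᵥ y) ≤ x ⬝ᵥ y := by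
    have hySy : 0 ≤ y ⬝ᵥ S *ᵥ y := by simpa using hS.dotProduct_mulVec_nonneg y
    rw [← hAy, add_mulVec, add_dotProduct, smul_mulVec, one_mulVec, smul_dotProduct,
      smul_eq_mul, dotProduct_comm (S *ᵥ y)]
    linarith
  -- `0 ≤ ‖x - βy‖² = x⬝x - 2β(x⬝y) + β²(y⬝y) ≤ x⬝x - β(x⬝y)`
  have hsq : 0 ≤ (x - β • y) ⬝ᵥ (x - β • y) := by
    simpa using dotProduct_star_self_nonneg (x - β • y)
  simp only [sub_dotProduct, dotProduct_sub, smul_dotProduct, dotProduct_smul, smul_eq_mul,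
    dotProduct_comm y x] at hsq
  nlinarith

end

theorem le_two_mul_log_one_add {q : ℝ} (hq0 : 0 ≤ q) (hq1 : q ≤ 1) :
    q ≤ 2 * Real.log (1 + q) := by
  have hpos : 0 < 1 + q := by linarith
  have hlog : q / (1 + q) ≤ Real.log (1 + q) :=
    calc q / (1 + q) = 1 - (1 + q)⁻¹ := by field_simp; ring
      _ ≤ Real.log (1 + q) := Real.one_sub_inv_le_log_of_pos hpos
  have : q ≤ 2 * (q / (1 + q)) := by
    rw [mul_div_assoc', le_div_iff₀ hpos]
    nlinarith
  linarith

section designMatrix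

variable {d : ℕ} {β : ℝ} (x : ℕ → Fin d → ℝ)

theorem designMatrix_succ (m : ℕ) :
    designMatrix β x (m + 1) = designMatrix β x m + vecMulVec (x m) (x m) := by
  simp only [designMatrix, Finset.sum_range_succ, add_assoc]

theorem posSemidef_sum_vecMulVec_self (m : ℕ) :
    (∑ s ∈ Finset.range m, vecMulVec (x s) (x s)).PosSemidef :=
  posSemidef_sum _ fun s _ => by simpa using posSemidef_vecMulVec_self_star (x s)

theorem designMatrix_posDef (hβ : 0 < β) (m : ℕ) : (designMatrix β x m).PosDef :=
  (PosDef.one.smul hβ).add_posSemidef (posSemidef_sum_vecMulVec_self x m)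

theorem dotProduct_inv_designMatrix_mulVec_nonneg (hβ : 0 < β) (m : ℕ) :
    0 ≤ x m ⬝ᵥ (designMatrix β x m)⁻¹ *ᵥ x m := by
  simpa using (designMatrix_posDef x hβ m).inv.posSemidef.dotProduct_mulVec_nonneg (x m)

theorem mul_dotProduct_inv_designMatrix_mulVec_le (hβ : 0 < β) (m : ℕ) :
    β * (x m ⬝ᵥ (designMatrix β x m)⁻¹ *ᵥ x m) ≤ x m ⬝ᵥ x m :=
  mul_dotProduct_inv_smul_one_add_mulVec_le hβ (posSemidef_sum_vecMulVec_self x m) (x m)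

theorem log_det_designMatrix_succ (hβ : 0 < β) (m : ℕ) :
    Real.log (designMatrix β x (m + 1)).det =
      Real.log (designMatrix β x m).det +
        Real.log (1 + x m ⬝ᵥ (designMatrix β x m)⁻¹ *ᵥ x m) := by
  have hq := dotProduct_inv_designMatrix_mulVec_nonneg x hβ m
  rw [designMatrix_succ, det_add_vecMulVec (designMatrix_posDef x hβ m).det_pos.ne'.isUnit,
    Real.log_mul (designMatrix_posDef x hβ m).det_pos.ne' (by positivity)]

end designMatrix

/-- First inequality of the elliptical potential lemma (Lemma 4): with
`‖x_m‖₂² ≤ C_x²` and `β ≥ max{1, C_x²}`,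
`Σ_{m=1}^M x_mᵀ A_{m−1}⁻¹ x_m ≤ 2 log(det A_M / det A_0)`
(0-indexed below: the `m`-th sample uses `A_m = βI + Σ_{s<m} x_s x_sᵀ`). -/
theorem stmt_5 {d M : ℕ} (Cx β : ℝ) (hβ : β ≥ max 1 (Cx ^ 2))
    (x : ℕ → Fin d → ℝ) (hx : ∀ m < M, x m ⬝ᵥ x m ≤ Cx ^ 2) :
    ∑ m ∈ Finset.range M, x m ⬝ᵥ (designMatrix β x m)⁻¹.mulVec (x m) ≤
      2 * Real.log ((designMatrix β x M).det / (designMatrix β x 0).det) := by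
  obtain ⟨hβ1, hβC⟩ := max_le_iff.mp hβ
  have hβ0 : 0 < β := by linarith
  have hdet (m : ℕ) : (designMatrix β x m).det ≠ 0 := (designMatrix_posDef x hβ0 m).det_pos.ne'
  calc ∑ m ∈ Finset.range M, x m ⬝ᵥ (designMatrix β x m)⁻¹ *ᵥ x m
      ≤ ∑ m ∈ Finset.range M,
          2 * (Real.log (designMatrix β x (m + 1)).det - Real.log (designMatrix β x m).det) := by
        refine Finset.sum_le_sum fun m hm => ?_
        have hq1 : x m ⬝ᵥ (designMatrix β x m)⁻¹ *ᵥ x m ≤ 1 := by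
          have := mul_dotProduct_inv_designMatrix_mulVec_le x hβ0 m
          have := hx m (Finset.mem_range.mp hm)
          nlinarith
        rw [log_det_designMatrix_succ x hβ0, add_sub_cancel_left]
        exact le_two_mul_log_one_add (dotProduct_inv_designMatrix_mulVec_nonneg x hβ0 m) hq1
    _ = 2 * Real.log ((designMatrix β x M).det / (designMatrix β x 0).det) := by
        rw [← Finset.mul_sum, Finset.sum_range_sub (fun m => Real.log (designMatrix β x m).det),
          Real.log_div (hdet M) (hdet 0)]
end
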